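/- arXiv:2604.02033 — 7 statements merged into one kernel-verified Lean document; each statement's English description precedes it below -/
import Mathlib

section
/- Let X, Y be finite types, C^X := X → ZMod 2, C^Y := Y → ZMod 2, d1 : C^X → C^Y a ZMod 2-linear map, and d1ᵀ : C^Y → C^X a ZMod 2-linear map satisfying ⟨d1ᵀ γ, a⟩ = ⟨γ, d1 a⟩ for all γ ∈ C^Y and a ∈ C^X (the transpose of d1 with respect to the standard pairings). Then for every action S : C^X → ℝ, every b ∈ C^Y, every c ∈ C^X and every γ ∈ C^Y, the path integral satisfies Z_S[b, c + d1ᵀ γ] = (−1)^{⟨γ, b⟩.val} · Z_S[b, c]; in particular adding a coboundary d1ᵀ γ to the charge configuration changes the amplitude only by an overall sign. -/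
open Finset

/-- The pairing `⟨c, a⟩ := Σ_x c x * a x` over `ZMod 2`. -/
def pairing {X : Type*} [Fintype X] (c a : X → ZMod 2) : ZMod 2 :=
  ∑ x, c x * a x

/-- The path integral `Z_S[b, c]` with action `S`, flux configuration `b` and charge
configuration `c`. -/
noncomputable def pathIntegral {X Y : Type*} [Fintype X] [Fintype Y]
    [DecidableEq X] [DecidableEq Y]
    (d1 : (X → ZMod 2) →ₗ[ZMod 2] (Y → ZMod 2))
    (S : (X → ZMod 2) → ℝ) (b : Y → ZMod 2) (c : X → ZMod 2) : ℂ :=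
  ∑ a ∈ Finset.univ.filter (fun a : X → ZMod 2 => d1 a = b),
    Complex.exp (2 * (Real.pi : ℂ) * Complex.I *
      ((S a + ((pairing c a).val : ℝ) / 2 : ℝ) : ℂ))

lemma pairing_add_left {X : Type*} [Fintype X] (c d a : X → ZMod 2) :
    pairing (c + d) a = pairing c a + pairing d a := by
  simp [pairing, add_mul, Finset.sum_add_distrib]

lemma exp_key (s : ℝ) (p q : ZMod 2) :
    Complex.exp (2 * (Real.pi : ℂ) * Complex.I *
      ((s + (((p + q).val : ℝ)) / 2 : ℝ) : ℂ)) =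
    (-1 : ℂ) ^ q.val * Complex.exp (2 * (Real.pi : ℂ) * Complex.I *
      ((s + ((p.val : ℝ)) / 2 : ℝ) : ℂ)) := by
  have h : ∀ t : ℝ, Complex.exp (2 * (Real.pi : ℂ) * Complex.I * ((t + 1/2 : ℝ) : ℂ))
      = - Complex.exp (2 * (Real.pi : ℂ) * Complex.I * ((t : ℝ) : ℂ)) := by
    intro t
    have : (2 * (Real.pi : ℂ) * Complex.I * ((t + 1/2 : ℝ) : ℂ)) =
        2 * (Real.pi : ℂ) * Complex.I * ((t : ℝ) : ℂ) + Real.pi * Complex.I := by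
      push_cast; ring
    rw [this, Complex.exp_add, Complex.exp_pi_mul_I]; ring
  have htwo : ∀ z : ZMod 2, z = 0 ∨ z = 1 := by decide
  rcases htwo p with hp | hp <;> rcases htwo q with hq | hq <;> subst hp <;> subst hq <;>
    simp only [show ((0:ZMod 2)+0).val = 0 from rfl, show ((0:ZMod 2)+1).val = 1 from rfl,
      show ((1:ZMod 2)+0).val = 1 from rfl, show ((1:ZMod 2)+1).val = 0 from rfl,
      show ((0:ZMod 2)).val = 0 from rfl, show ((1:ZMod 2)).val = 1 from rfl,
      pow_zero, pow_one, Nat.cast_zero, Nat.cast_one, one_mul]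
  · have := h s; push_cast at this ⊢; rw [this]; ring_nf
  · have := h s; push_cast at this ⊢; rw [this]; ring_nf

/-- Adding a coboundary `d1ᵀ γ` to the charge configuration changes the path integral
only by the overall sign `(−1)^⟨γ, b⟩`. -/
theorem pathIntegral_charge_add_coboundary
    {X Y : Type*} [Fintype X] [Fintype Y] [DecidableEq X] [DecidableEq Y]
    (d1 : (X → ZMod 2) →ₗ[ZMod 2] (Y → ZMod 2))
    (d1T : (Y → ZMod 2) →ₗ[ZMod 2] (X → ZMod 2))
    (htranspose : ∀ (γ : Y → ZMod 2) (a : X → ZMod 2),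
      pairing (d1T γ) a = pairing γ (d1 a))
    (S : (X → ZMod 2) → ℝ) (b : Y → ZMod 2) (c : X → ZMod 2) (γ : Y → ZMod 2) :
    pathIntegral d1 S b (c + d1T γ) =
      (-1 : ℂ) ^ (pairing γ b).val * pathIntegral d1 S b c := by
  unfold pathIntegral
  rw [Finset.mul_sum]
  refine Finset.sum_congr rfl ?_
  intro a ha
  have hda : d1 a = b := (Finset.mem_filter.mp ha).2
  rw [pairing_add_left, htranspose, hda, exp_key]
end

section
/- Let W, X, Y be finite types, C^W := W → ZMod 2, C^X := X → ZMod 2, C^Y := Y → ZMod 2, and let d0 : C^W → C^X and d1 : C^X → C^Y be ZMod 2-linear maps with d1 ∘ d0 = 0. Let S : C^X → ℝ be an action, b ∈ C^Y, u ∈ C^W, and κ ∈ ZMod 2, and suppose that for every a ∈ C^X with d1 a = b, the real number S(a + d0 u) − S(a) − (κ.val : ℝ)/2 is an integer (the gauge variance along u is constantly κ/2 on the fiber over b). Then for every charge configuration c ∈ C^X with ⟨c, d0 u⟩ ≠ κ, the path integral Z_S[b, c] equals 0. -/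
open Finset

lemma pairing_add' {X : Type*} [Fintype X] (c a b : X → ZMod 2) :
    pairing c (a + b) = pairing c a + pairing c b := by
  simp [pairing, mul_add, Finset.sum_add_distrib]

lemma exp_shift' (x : ℝ) (k : ℤ) :
    Complex.exp (2 * (Real.pi : ℂ) * Complex.I * ((x + (k + 1/2) : ℝ) : ℂ)) =
      - Complex.exp (2 * (Real.pi : ℂ) * Complex.I * (x : ℂ)) := by
  push_cast
  rw [mul_add, Complex.exp_add, mul_add, Complex.exp_add]
  have h1 : Complex.exp (2 * (Real.pi : ℂ) * Complex.I * (k : ℂ)) = 1 := by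
    have := Complex.exp_int_mul_two_pi_mul_I k
    rw [← this]; ring_nf
  have h2 : Complex.exp (2 * (Real.pi : ℂ) * Complex.I * (1/2 : ℂ)) = -1 := by
    have := Complex.exp_pi_mul_I
    rw [← this]; ring_nf
  rw [h1, h2]; ring

/-- If the gauge variance of the action along `u` is constantly `κ/2` (mod 1) on the fiber
over `b`, then the path integral vanishes for every charge configuration `c` violating the
twisted constraint `⟨c, d0 u⟩ = κ`. -/
theorem pathIntegral_eq_zero_of_twisted_constraint_violated
    {W X Y : Type*} [Fintype W] [Fintype X] [Fintype Y]
    [DecidableEq W] [DecidableEq X] [DecidableEq Y]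
    (d0 : (W → ZMod 2) →ₗ[ZMod 2] (X → ZMod 2))
    (d1 : (X → ZMod 2) →ₗ[ZMod 2] (Y → ZMod 2))
    (hdd : ∀ w : W → ZMod 2, d1 (d0 w) = 0)
    (S : (X → ZMod 2) → ℝ) (b : Y → ZMod 2) (u : W → ZMod 2) (κ : ZMod 2)
    (hgauge : ∀ a : X → ZMod 2, d1 a = b →
      ∃ n : ℤ, S (a + d0 u) - S a - ((κ.val : ℝ) / 2) = (n : ℝ))
    (c : X → ZMod 2) (hc : pairing c (d0 u) ≠ κ) :
    pathIntegral d1 S b c = 0 := by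
  have hpc : pairing c (d0 u) = κ + 1 := by
    have h : ∀ p q : ZMod 2, p ≠ q → p = q + 1 := by decide
    exact h _ _ hc
  have hdu : d0 u + d0 u = 0 := by
    ext x; simp [CharTwo.add_self_eq_zero]
  have key : pathIntegral d1 S b c = - pathIntegral d1 S b c := by
    unfold pathIntegral
    rw [← Finset.sum_neg_distrib]
    apply Finset.sum_nbij' (i := fun a => a + d0 u) (j := fun a => a + d0 u)
    · intro a ha
      simp only [Finset.mem_filter, Finset.mem_univ, true_and] at ha ⊢
      rw [map_add, hdd, add_zero, ha]
    · intro a ha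
      simp only [Finset.mem_filter, Finset.mem_univ, true_and] at ha ⊢
      rw [map_add, hdd, add_zero, ha]
    · intro a _; rw [add_assoc, hdu, add_zero]
    · intro a _; rw [add_assoc, hdu, add_zero]
    · intro a ha
      simp only [Finset.mem_filter, Finset.mem_univ, true_and] at ha
      obtain ⟨n, hn⟩ := hgauge a ha
      set v : ℕ := (pairing c a).val with hv
      set v' : ℕ := (pairing c (a + d0 u)).val with hv'
      have hval : v' = (v + (κ + 1).val) % 2 := by
        rw [hv', pairing_add', hpc, ZMod.val_add]
      have hvlt : v < 2 := ZMod.val_lt _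
      have hklt : (κ + 1).val < 2 := ZMod.val_lt _
      have hkv : κ.val < 2 := ZMod.val_lt _
      have hkk : (κ + 1).val = 1 - κ.val := by
        rw [ZMod.val_add]
        have : κ.val = 0 ∨ κ.val = 1 := by omega
        rcases this with h | h <;> simp [h, ZMod.val_one]
      obtain ⟨m, hm⟩ : ∃ m : ℤ, (κ.val : ℤ) + v' = v + 2 * m + 1 := by
        refine ⟨((κ.val : ℤ) + v' - v - 1) / 2, ?_⟩
        omega
      have hexp : S (a + d0 u) + (v' : ℝ) / 2 = (S a + (v : ℝ) / 2) + ((n + m : ℤ) + 1/2) := by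
        have hm' : (κ.val : ℝ) + v' = v + 2 * m + 1 := by exact_mod_cast hm
        push_cast
        nlinarith [hn]
      rw [hexp, exp_shift', neg_neg]
  have h2 : (2:ℂ) * pathIntegral d1 S b c = 0 := by linear_combination key
  simpa using h2
end

section
/- Let W, X, Y be vector spaces over ZMod 2, let d0 : W → X and d1 : X → Y be linear maps with d1 ∘ d0 = 0, let N be an additive commutative group, and let S : X → N be a function with S 0 = 0 that is gauge invariant (for all a ∈ X, v ∈ W: d1 a = 0 implies S(a + d0 v) = S(a)) and third order, meaning its second derivative ∂²S is additive in its first argument: ∂²S(x + x', y, z) = ∂²S(x, y, z) + ∂²S(x', y, z) for all x, x', y, z ∈ X. Then the twisted-error bilinear form is well defined, i.e. independent of the choice of representative of the fiber within a gauge orbit: for all a ∈ X, α, w, v ∈ W, ∂²S(a + d0 α, d0 w, d0 v) = ∂²S(a, d0 w, d0 v). -/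
/-- The second derivative
`∂²S(x, y, z) := S(x+y+z) − S(x+y) − S(x+z) − S(y+z) + S(x) + S(y) + S(z)`. -/
def deriv2 {M N : Type*} [AddCommGroup M] [AddCommGroup N] (S : M → N) (x y z : M) : N :=
  S (x + y + z) - S (x + y) - S (x + z) - S (y + z) + S x + S y + S z

/-- For a gauge-invariant third-order action `S` with `S 0 = 0`, the twisted-error
bilinear form `∂²S(a, d0 w, d0 v)` only depends on the gauge orbit of `a`. -/
theorem deriv2_gauge_independent
    {W X Y : Type*} [AddCommGroup W] [Module (ZMod 2) W]
    [AddCommGroup X] [Module (ZMod 2) X] [AddCommGroup Y] [Module (ZMod 2) Y]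
    (d0 : W →ₗ[ZMod 2] X) (d1 : X →ₗ[ZMod 2] Y)
    (hdd : ∀ w : W, d1 (d0 w) = 0)
    {N : Type*} [AddCommGroup N] (S : X → N) (hS0 : S 0 = 0)
    (hgauge : ∀ (a : X) (v : W), d1 a = 0 → S (a + d0 v) = S a)
    (hthird : ∀ x x' y z : X,
      deriv2 S (x + x') y z = deriv2 S x y z + deriv2 S x' y z)
    (a : X) (α w v : W) :
    deriv2 S (a + d0 α) (d0 w) (d0 v) = deriv2 S a (d0 w) (d0 v) := by
  have hSd0 : ∀ u : W, S (d0 u) = 0 := by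
    intro u
    have := hgauge 0 u (by simp)
    simpa [hS0] using this
  rw [hthird]
  have : deriv2 S (d0 α) (d0 w) (d0 v) = 0 := by
    simp [deriv2, ← map_add, hSd0]
  rw [this, add_zero]
end

section
/- Let W, X, Y be vector spaces over ZMod 2, let d0 : W → X and d1 : X → Y be linear maps with d1 ∘ d0 = 0, let N be an additive commutative group, and let S : X → N be a function with S 0 = 0 that is gauge invariant (for all a ∈ X, v ∈ W: d1 a = 0 implies S(a + d0 v) = S(a)) and third order, meaning ∂²S is additive in its first argument. Then for every fixed a ∈ X, the map (v, w) ↦ ∂²S(a, d0 w, d0 v) on W × W is a symmetric bi-additive form: it is unchanged when v and w are exchanged, and it is additive in v and additive in w. -/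
lemma deriv2_swap13 {M N : Type*} [AddCommGroup M] [AddCommGroup N] (S : M → N) (x y z : M) :
    deriv2 S x y z = deriv2 S z y x := by
  unfold deriv2
  rw [show x + y + z = z + y + x from by abel, show x + y = y + x from by abel,
    show x + z = z + x from by abel, show y + z = z + y from by abel]
  abel

lemma deriv2_swap23 {M N : Type*} [AddCommGroup M] [AddCommGroup N] (S : M → N) (x y z : M) :
    deriv2 S x y z = deriv2 S x z y := by
  unfold deriv2
  rw [show x + y + z = x + z + y from by abel, show y + z = z + y from by abel]
  abel

/-- For a gauge-invariant third-order action `S` with `S 0 = 0` and fixed `a`, the map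
`(v, w) ↦ ∂²S(a, d0 w, d0 v)` is a symmetric bi-additive form on `W × W`. -/
theorem deriv2_symm_biadditive
    {W X Y : Type*} [AddCommGroup W] [Module (ZMod 2) W]
    [AddCommGroup X] [Module (ZMod 2) X] [AddCommGroup Y] [Module (ZMod 2) Y]
    (d0 : W →ₗ[ZMod 2] X) (d1 : X →ₗ[ZMod 2] Y)
    (hdd : ∀ w : W, d1 (d0 w) = 0)
    {N : Type*} [AddCommGroup N] (S : X → N) (hS0 : S 0 = 0)
    (hgauge : ∀ (a : X) (v : W), d1 a = 0 → S (a + d0 v) = S a)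
    (hthird : ∀ x x' y z : X,
      deriv2 S (x + x') y z = deriv2 S x y z + deriv2 S x' y z)
    (a : X) :
    (∀ v w : W, deriv2 S a (d0 w) (d0 v) = deriv2 S a (d0 v) (d0 w)) ∧
    (∀ v v' w : W, deriv2 S a (d0 w) (d0 (v + v')) =
      deriv2 S a (d0 w) (d0 v) + deriv2 S a (d0 w) (d0 v')) ∧
    (∀ v w w' : W, deriv2 S a (d0 (w + w')) (d0 v) =
      deriv2 S a (d0 w) (d0 v) + deriv2 S a (d0 w') (d0 v)) := by
  refine ⟨fun v w => deriv2_swap23 S a (d0 w) (d0 v), ?_, ?_⟩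
  · intro v v' w
    rw [map_add, deriv2_swap13, hthird, deriv2_swap13, deriv2_swap13 S (d0 v')]
  · intro v w w'
    rw [map_add, deriv2_swap23 S a, deriv2_swap13, hthird, deriv2_swap13, deriv2_swap13 S (d0 w'),
      deriv2_swap23 S a (d0 v) (d0 w), deriv2_swap23 S a (d0 v) (d0 w')]
end

section
/- Let W, X, Y be vector spaces over ZMod 2, let d0 : W → X and d1 : X → Y be linear maps with d1 ∘ d0 = 0, let N be an additive commutative group, and let S : X → N be a function with S 0 = 0 that is gauge invariant (for all a ∈ X, v ∈ W: d1 a = 0 implies S(a + d0 v) = S(a)) and third order, meaning ∂²S is additive in its first argument. Fix a ∈ X and suppose u ∈ W lies in the kernel of the twisted form at a, i.e. ∂²S(a, d0 w, d0 u) = 0 for all w ∈ W. Then the gauge variance along u is constant on the gauge orbit of a: for every α ∈ W, S(a + d0 α + d0 u) − S(a + d0 α) = S(a + d0 u) − S(a). -/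
/-- For a gauge-invariant third-order action `S` with `S 0 = 0`, if `u` lies in the
kernel of the twisted form at `a`, then the gauge variance along `u` is constant on the
gauge orbit of `a`. -/
theorem gauge_variance_constant_on_orbit_of_kernel
    {W X Y : Type*} [AddCommGroup W] [Module (ZMod 2) W]
    [AddCommGroup X] [Module (ZMod 2) X] [AddCommGroup Y] [Module (ZMod 2) Y]
    (d0 : W →ₗ[ZMod 2] X) (d1 : X →ₗ[ZMod 2] Y)
    (hdd : ∀ w : W, d1 (d0 w) = 0)
    {N : Type*} [AddCommGroup N] (S : X → N) (hS0 : S 0 = 0)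
    (hgauge : ∀ (a : X) (v : W), d1 a = 0 → S (a + d0 v) = S a)
    (hthird : ∀ x x' y z : X,
      deriv2 S (x + x') y z = deriv2 S x y z + deriv2 S x' y z)
    (a : X) (u : W)
    (hker : ∀ w : W, deriv2 S a (d0 w) (d0 u) = 0)
    (α : W) :
    S (a + d0 α + d0 u) - S (a + d0 α) = S (a + d0 u) - S a := by
  have hSd : ∀ v : W, S (d0 v) = 0 := by
    intro v
    have := hgauge 0 v (by simp)
    simpa [hS0] using this
  have h := hker α
  unfold deriv2 at h
  have h1 : S (d0 α + d0 u) = 0 := by rw [← map_add]; exact hSd _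
  rw [hSd, hSd, h1] at h
  have h2 : S (a + d0 α + d0 u) - S (a + d0 α) - (S (a + d0 u) - S a) = 0 := by
    rw [← h]; abel
  exact sub_eq_zero.mp h2
end

section
/- Let A be an additive commutative group, let V and E be finite types, let ∂ : (E → A) →+ (V → A) be an additive map (the boundary map of a decoding graph), and let s : V → A be a syndrome. Let B : ℤ → Set V be a family of pairwise disjoint sets whose union is all of V (the boundary time-slices), and let e : ℤ → (E → A) be a family of commit corrections with e t = 0 for all but finitely many t. Assume: (i) each committed boundary is supported on the two adjacent time-slices, i.e. for every t and every vertex v, if (∂ (e t)) v ≠ 0 then v ∈ B t or v ∈ B (t + 1); and (ii) for every t and every v ∈ B t, (∂ (e (t − 1))) v + (∂ (e t)) v = s v. Then the total just-in-time correction is valid: ∂ (Σ_t e t) = s. -/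
/-- Validity of the total just-in-time correction: if each committed correction has
boundary supported on the two adjacent time-slices and, on each slice, the boundaries of
the two adjacent commits sum to the observed syndrome, then the sum of all commits is a
valid correction for the syndrome. -/
theorem jit_total_correction_valid
    {A : Type*} [AddCommGroup A] {V E : Type*} [Fintype V] [Fintype E]
    (bdry : (E → A) →+ (V → A)) (s : V → A)
    (B : ℤ → Set V)
    (hdisj : ∀ t t' : ℤ, t ≠ t' → Disjoint (B t) (B t'))
    (hcover : ∀ v : V, ∃ t : ℤ, v ∈ B t)
    (e : ℤ → (E → A))
    (hfin : (Function.support e).Finite)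
    (hsupp : ∀ (t : ℤ) (v : V), bdry (e t) v ≠ 0 → v ∈ B t ∨ v ∈ B (t + 1))
    (hsum : ∀ t : ℤ, ∀ v ∈ B t, bdry (e (t - 1)) v + bdry (e t) v = s v) :
    bdry (∑ᶠ t : ℤ, e t) = s := by
  have h1 : bdry (∑ᶠ t : ℤ, e t) = ∑ᶠ t : ℤ, bdry (e t) :=
    AddMonoidHom.map_finsum bdry hfin
  funext v
  obtain ⟨t₀, hv⟩ := hcover v
  have huniq : ∀ t : ℤ, v ∈ B t → t = t₀ := by
    intro t ht
    by_contra h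
    exact Set.disjoint_left.mp (hdisj t t₀ h) ht hv
  have hfin2 : (Function.support fun t => bdry (e t)).Finite := by
    apply hfin.subset
    intro t ht
    simp only [Function.mem_support] at ht ⊢
    intro h0
    exact ht (by rw [h0, map_zero])
  have h2 : (∑ᶠ t : ℤ, bdry (e t)) v = ∑ᶠ t : ℤ, bdry (e t) v :=
    AddMonoidHom.map_finsum (Pi.evalAddMonoidHom (fun _ : V => A) v) hfin2
  have hsubset : (Function.support fun t => bdry (e t) v) ⊆ ({t₀ - 1, t₀} : Finset ℤ) := by
    intro t ht
    simp only [Function.mem_support] at ht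
    rcases hsupp t v ht with h | h
    · simp [huniq t h]
    · have := huniq (t + 1) h
      simp [show t = t₀ - 1 by omega]
  have h3 : ∑ᶠ t : ℤ, bdry (e t) v = ∑ t ∈ ({t₀ - 1, t₀} : Finset ℤ), bdry (e t) v :=
    finsum_eq_sum_of_support_subset _ (by exact_mod_cast hsubset)
  rw [h1, h2, h3, Finset.sum_pair (by omega)]
  exact hsum t₀ v hv
end

section
/- Let ι be a finite type, G := ι → ZMod 2, and H := G → ℂ. For j ∈ {1, 2} let θⱼ : G → ZMod 2 and hⱼ ∈ G, and let Aⱼ : H →ₗ[ℂ] H be the decorated X-type operator (Aⱼ f) g := (−1)^{(θⱼ g).val} • f (g + hⱼ). Assume each Aⱼ is an involution, i.e. θⱼ(g + hⱼ) = θⱼ(g) for all g, and assume each θⱼ is quadratic: for every k ∈ G there exist c ∈ ZMod 2 and t ∈ G such that θⱼ(g + k) + θⱼ(g) = c + ⟨t, g⟩ for all g ∈ G. Then the group commutator A₁ ∘ A₂ ∘ A₁ ∘ A₂ is a signed Z-type operator: there exist c ∈ ZMod 2 and t ∈ G such that A₁ ∘ A₂ ∘ A₁ ∘ A₂ = (−1)^{c.val}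 • Zop(t), where (Zop(t) f) g := (−1)^{(⟨t, g⟩).val} • f g. -/
open Finset

/-- The decorated X-type operator `A(θ, h)` acting on `H := (ι → ZMod 2) → ℂ` by
`(A f) g := (−1)^{θ g} • f (g + h)`. -/
noncomputable def decoratedX {ι : Type*} [Fintype ι]
    (θ : (ι → ZMod 2) → ZMod 2) (h : ι → ZMod 2) :
    ((ι → ZMod 2) → ℂ) →ₗ[ℂ] ((ι → ZMod 2) → ℂ) where
  toFun f := fun g => ((-1 : ℂ)) ^ (θ g).val • f (g + h)
  map_add' f₁ f₂ := by
    funext g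
    simp only [Pi.add_apply, smul_eq_mul]
    ring
  map_smul' c f := by
    funext g
    simp only [Pi.smul_apply, smul_eq_mul, RingHom.id_apply]
    ring

/-- The Z-type operator `Zop t` acting diagonally by `(Zop t f) g := (−1)^{⟨t, g⟩} • f g`,
where `⟨t, g⟩ := Σ_i t i * g i`. -/
noncomputable def Zop {ι : Type*} [Fintype ι] (t : ι → ZMod 2) :
    ((ι → ZMod 2) → ℂ) →ₗ[ℂ] ((ι → ZMod 2) → ℂ) where
  toFun f := fun g => ((-1 : ℂ)) ^ (∑ i, t i * g i : ZMod 2).val • f g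
  map_add' f₁ f₂ := by
    funext g
    simp only [Pi.add_apply, smul_eq_mul]
    ring
  map_smul' c f := by
    funext g
    simp only [Pi.smul_apply, smul_eq_mul, RingHom.id_apply]
    ring

/-- The group commutator of two involutive decorated X-type operators with quadratic
(Clifford) phase functions is a signed Z-type operator. -/
theorem decoratedX_group_commutator_is_Ztype
    {ι : Type*} [Fintype ι] [DecidableEq ι]
    (θ₁ θ₂ : (ι → ZMod 2) → ZMod 2) (h₁ h₂ : ι → ZMod 2)
    (hinv₁ : ∀ g : ι → ZMod 2, θ₁ (g + h₁) = θ₁ g)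
    (hinv₂ : ∀ g : ι → ZMod 2, θ₂ (g + h₂) = θ₂ g)
    (hquad₁ : ∀ k : ι → ZMod 2, ∃ (c : ZMod 2) (t : ι → ZMod 2),
      ∀ g : ι → ZMod 2, θ₁ (g + k) + θ₁ g = c + ∑ i, t i * g i)
    (hquad₂ : ∀ k : ι → ZMod 2, ∃ (c : ZMod 2) (t : ι → ZMod 2),
      ∀ g : ι → ZMod 2, θ₂ (g + k) + θ₂ g = c + ∑ i, t i * g i) :
    ∃ (c : ZMod 2) (t : ι → ZMod 2),
      (decoratedX θ₁ h₁) ∘ₗ (decoratedX θ₂ h₂) ∘ₗ (decoratedX θ₁ h₁) ∘ₗ (decoratedX θ₂ h₂)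
        = ((-1 : ℂ)) ^ c.val • Zop t := by
  obtain ⟨c₁, t₁, hq₁⟩ := hquad₁ h₂
  obtain ⟨c₂, t₂, hq₂⟩ := hquad₂ h₁
  refine ⟨c₁ + c₂, t₁ + t₂, ?_⟩
  apply LinearMap.ext; intro f; funext g
  have cancel : ∀ x y : ι → ZMod 2, x + y + y = x := by
    intro x y; funext i
    simp [Pi.add_apply, add_assoc, CharTwo.add_self_eq_zero]
  have e1 : g + h₁ + h₂ + h₁ = g + h₂ := by
    have : g + h₁ + h₂ + h₁ = g + h₂ + h₁ + h₁ := by abel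
    rw [this, cancel]
  have e2 : g + h₂ + h₂ = g := cancel g h₂
  have e3 : θ₁ (g + h₁ + h₂) = θ₁ (g + h₂) := by
    have : g + h₁ + h₂ = g + h₂ + h₁ := by abel
    rw [this, hinv₁]
  simp only [LinearMap.comp_apply, LinearMap.smul_apply, decoratedX, Zop,
    LinearMap.coe_mk, AddHom.coe_mk, Pi.smul_apply, smul_eq_mul, e1, e2, e3,
    hinv₂ g]
  -- now everything is a product of signs times f g
  have key : ((-1 : ℂ)) ^ (θ₁ g).val * ((-1 : ℂ)) ^ (θ₂ (g + h₁)).val *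
      ((-1 : ℂ)) ^ (θ₁ (g + h₂)).val * ((-1 : ℂ)) ^ (θ₂ g).val
      = ((-1 : ℂ)) ^ (c₁ + c₂).val *
        ((-1 : ℂ)) ^ (∑ i, (t₁ + t₂) i * g i : ZMod 2).val := by
    have chi : ∀ a b : ZMod 2,
        ((-1 : ℂ)) ^ ((a + b).val) = ((-1 : ℂ)) ^ a.val * ((-1 : ℂ)) ^ b.val := by
      intro a b
      rw [ZMod.val_add, ← neg_one_pow_eq_pow_mod_two, pow_add]
    have s1 : θ₁ (g + h₂) + θ₁ g = c₁ + ∑ i, t₁ i * g i := hq₁ g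
    have s2 : θ₂ (g + h₁) + θ₂ g = c₂ + ∑ i, t₂ i * g i := hq₂ g
    have sum_eq : (∑ i, (t₁ + t₂) i * g i : ZMod 2)
        = (∑ i, t₁ i * g i) + (∑ i, t₂ i * g i) := by
      rw [← Finset.sum_add_distrib]
      congr 1; funext i; simp [Pi.add_apply, add_mul]
    calc ((-1 : ℂ)) ^ (θ₁ g).val * ((-1 : ℂ)) ^ (θ₂ (g + h₁)).val *
        ((-1 : ℂ)) ^ (θ₁ (g + h₂)).val * ((-1 : ℂ)) ^ (θ₂ g).val
        = ((-1 : ℂ)) ^ ((θ₁ (g + h₂) + θ₁ g).val) *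
          ((-1 : ℂ)) ^ ((θ₂ (g + h₁) + θ₂ g).val) := by
          rw [chi, chi]; ring
      _ = ((-1 : ℂ)) ^ ((c₁ + ∑ i, t₁ i * g i).val) *
          ((-1 : ℂ)) ^ ((c₂ + ∑ i, t₂ i * g i).val) := by rw [s1, s2]
      _ = _ := by
          simp only [chi, sum_eq]; ring
  calc ((-1 : ℂ)) ^ (θ₁ g).val * (((-1 : ℂ)) ^ (θ₂ (g + h₁)).val *
        (((-1 : ℂ)) ^ (θ₁ (g + h₂)).val * (((-1 : ℂ)) ^ (θ₂ g).val * f g)))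
      = (((-1 : ℂ)) ^ (θ₁ g).val * ((-1 : ℂ)) ^ (θ₂ (g + h₁)).val *
        ((-1 : ℂ)) ^ (θ₁ (g + h₂)).val * ((-1 : ℂ)) ^ (θ₂ g).val) * f g := by ring
    _ = _ := by rw [key]; ring
end
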